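/- arXiv:1808.09531 — 3 statements merged into one kernel-verified Lean document; each statement's English description precedes it below -/
import Mathlib

section
/- Let G' = (V',E') be a finite simple graph, r a positive integer, G = G(G',r) the gadget graph, X = A₁ ∪ A₂ ∪ B, and γ_r = (r²+r−1)/(2r²+2r−1). If G' contains a clique of size r, then X is not a maximal γ_r-quasi-clique in G (there exists a γ_r-quasi-clique of G strictly containing X). -/
open SimpleGraph Set

/-- Vertex type of the gadget graph: the original vertices `V`, plus
`A₁` and `A₂` (each of size `r²`) and `B` (of size `r`). -/
abbrev GadgetV (V : Type*) (r : ℕ) : Type _ := V ⊕ (Fin (r ^ 2) ⊕ Fin (r ^ 2) ⊕ Fin r)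

/-- Membership in `A₁`. -/
def isA1 {V : Type*} {r : ℕ} : GadgetV V r → Prop
  | Sum.inr (Sum.inl _) => True
  | _ => False

/-- Membership in `A₂`. -/
def isA2 {V : Type*} {r : ℕ} : GadgetV V r → Prop
  | Sum.inr (Sum.inr (Sum.inl _)) => True
  | _ => False

/-- Membership in `B`. -/
def isB {V : Type*} {r : ℕ} : GadgetV V r → Prop
  | Sum.inr (Sum.inr (Sum.inr _)) => True
  | _ => False

/-- The gadget graph `G(G',r)`: all edges of `G'`, `A₁`, `A₂`, `B` are cliques,
all pairs between `A₁` and `A₂`, between `A₁` and `B`, and between `A₁` and `V'`.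
(A vertex of `A₁` is adjacent to every other vertex.) -/
def gadget {V : Type*} (G' : SimpleGraph V) (r : ℕ) : SimpleGraph (GadgetV V r) :=
  SimpleGraph.fromRel fun a b =>
    isA1 a ∨ (∃ u v, a = Sum.inl u ∧ b = Sum.inl v ∧ G'.Adj u v) ∨
      (isA2 a ∧ isA2 b) ∨ (isB a ∧ isB b)

/-- The set `X = A₁ ∪ A₂ ∪ B`. -/
def Xset (V : Type*) (r : ℕ) : Set (GadgetV V r) := {x | isA1 x ∨ isA2 x ∨ isB x}

/-- Degree of a vertex `v` in the subgraph of `G` induced on `Q`: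
the number of neighbors of `v` lying in `Q`. -/
noncomputable def degIn {W : Type*} (G : SimpleGraph W) (Q : Set W) (v : W) : ℕ :=
  (Q ∩ G.neighborSet v).ncard

/-- `Q` is a `γ`-quasi-clique in `G`: the induced subgraph `G[Q]` is connected and
every vertex of `Q` has degree at least `⌈γ·(|Q|-1)⌉` in `G[Q]`. -/
def IsQuasiClique {W : Type*} (G : SimpleGraph W) (γ : ℚ) (Q : Set W) : Prop :=
  (G.induce Q).Connected ∧ ∀ v ∈ Q, ⌈γ * ((Q.ncard : ℚ) - 1)⌉ ≤ (degIn G Q v : ℤ)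

/-- `γ_r = (r²+r−1)/(2r²+2r−1)`. -/
def gammaR (r : ℕ) : ℚ := ((r : ℚ) ^ 2 + r - 1) / (2 * (r : ℚ) ^ 2 + 2 * r - 1)

/-! Extend `X` by a copy of an `r`-clique `L` of `G'`. The set `Q = X ∪ L` has `2r² + 2r`
vertices, so the threshold `⌈γ_r (|Q| - 1)⌉` is exactly `r² + r - 1`. Every vertex of `Q` sees
all of `A₁` and the rest of its own clique (`A₁`, `A₂`, `B` or `L`, each of size at least `r`),
which meets the threshold, and any vertex of `A₁` is adjacent to all of `Q`, so `G[Q]` is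
connected. -/

namespace SimpleGraph

variable {W : Type*} {G : SimpleGraph W} {Q C D : Set W} {v : W}

lemma induce_connected_of_forall_adj (hv : v ∈ Q) (hadj : ∀ w ∈ Q, w ≠ v → G.Adj v w) :
    (G.induce Q).Connected := by
  rw [connected_iff_exists_forall_reachable]
  refine ⟨⟨v, hv⟩, fun w => ?_⟩
  rcases eq_or_ne w ⟨v, hv⟩ with rfl | hw
  · rfl
  · exact Adj.reachable (hadj w w.2 fun h => hw (Subtype.ext h))

lemma degIn_eq_ncard_sub_one_of_forall_adj (hv : v ∈ Q) (hadj : ∀ w ∈ Q, w ≠ v → G.Adj v w) :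
    degIn G Q v = Q.ncard - 1 := by
  have hnbr : Q ∩ G.neighborSet v = Q \ {v} := by
    ext w
    simp only [mem_inter_iff, mem_neighborSet, mem_sdiff, mem_singleton_iff]
    exact ⟨fun ⟨hw, h⟩ => ⟨hw, h.ne'⟩, fun ⟨hw, h⟩ => ⟨hw, hadj w hw h⟩⟩
  rw [degIn, hnbr, ncard_sdiff_singleton_of_mem hv]

lemma ncard_add_ncard_le_degIn_add_one (hQ : Q.Finite) (hvC : v ∈ C) (hCQ : C ⊆ Q)
    (hC : G.IsClique C) (hDQ : D ⊆ Q) (hD : D ⊆ G.neighborSet v) (hDC : Disjoint D C) :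
    D.ncard + C.ncard ≤ degIn G Q v + 1 := by
  have hsub : D ∪ C \ {v} ⊆ Q ∩ G.neighborSet v := by
    rintro w (hw | ⟨hwC, hwv⟩)
    · exact ⟨hDQ hw, hD hw⟩
    · exact ⟨hCQ hwC, hC hvC hwC (Ne.symm hwv)⟩
  have hdisj : Disjoint D (C \ {v}) := hDC.mono_right sdiff_subset
  have hle := ncard_le_ncard hsub (hQ.inter_of_left _)
  rw [ncard_union_eq hdisj (hQ.subset hDQ) ((hQ.subset hCQ).sdiff),
    ncard_sdiff_singleton_of_mem hvC] at hle
  have := (ncard_pos (hQ.subset hCQ)).2 ⟨v, hvC⟩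
  rw [degIn]
  omega

end SimpleGraph

section Gadget

variable {V : Type*} {r : ℕ}

def A1set (V : Type*) (r : ℕ) : Set (GadgetV V r) := {x | isA1 x}

def A2set (V : Type*) (r : ℕ) : Set (GadgetV V r) := {x | isA2 x}

def Bset (V : Type*) (r : ℕ) : Set (GadgetV V r) := {x | isB x}

lemma Xset_eq_union : Xset V r = A1set V r ∪ (A2set V r ∪ Bset V r) := rfl

lemma A1set_eq_range : A1set V r = range (fun i => Sum.inr (Sum.inl i)) := by
  ext x; rcases x with _ | _ | _ | _ <;> simp [A1set, isA1]

lemma A2set_eq_range : A2set V r = range (fun i => Sum.inr (Sum.inr (Sum.inl i))) := by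
  ext x; rcases x with _ | _ | _ | _ <;> simp [A2set, isA2]

lemma Bset_eq_range : Bset V r = range (fun i => Sum.inr (Sum.inr (Sum.inr i))) := by
  ext x; rcases x with _ | _ | _ | _ <;> simp [Bset, isB]

lemma ncard_A1set : (A1set V r).ncard = r ^ 2 := by
  rw [A1set_eq_range, ncard_range_of_injective (by intro i j h; simpa using h)]
  simp

lemma ncard_A2set : (A2set V r).ncard = r ^ 2 := by
  rw [A2set_eq_range, ncard_range_of_injective (by intro i j h; simpa using h)]
  simp

lemma ncard_Bset : (Bset V r).ncard = r := by
  rw [Bset_eq_range, ncard_range_of_injective (by intro i j h; simpa using h)]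
  simp

lemma A1set_finite : (A1set V r).Finite := A1set_eq_range ▸ finite_range _

lemma A2set_finite : (A2set V r).Finite := A2set_eq_range ▸ finite_range _

lemma Bset_finite : (Bset V r).Finite := Bset_eq_range ▸ finite_range _

lemma Xset_finite : (Xset V r).Finite :=
  A1set_finite.union (A2set_finite.union Bset_finite)

lemma disjoint_A1set_A2set : Disjoint (A1set V r) (A2set V r) := by
  rw [Set.disjoint_left]; rintro (_ | _ | _ | _) <;> simp [A1set, A2set, isA1, isA2]

lemma disjoint_A1set_Bset : Disjoint (A1set V r) (Bset V r) := by
  rw [Set.disjoint_left]; rintro (_ | _ | _ | _) <;> simp [A1set, Bset, isA1, isB]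

lemma disjoint_A2set_Bset : Disjoint (A2set V r) (Bset V r) := by
  rw [Set.disjoint_left]; rintro (_ | _ | _ | _) <;> simp [A2set, Bset, isA2, isB]

lemma inl_notMem_Xset (u : V) : (Sum.inl u : GadgetV V r) ∉ Xset V r := by
  simp [Xset, isA1, isA2, isB]

lemma disjoint_Xset_image_inl (s : Set V) : Disjoint (Xset V r) (Sum.inl '' s) := by
  rw [Set.disjoint_left]; rintro _ hx ⟨u, -, rfl⟩; exact inl_notMem_Xset u hx

lemma ncard_Xset : (Xset V r).ncard = 2 * r ^ 2 + r := by
  rw [Xset_eq_union, ncard_union_eq (disjoint_A1set_A2set.union_right disjoint_A1set_Bset)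
      A1set_finite (A2set_finite.union Bset_finite),
    ncard_union_eq disjoint_A2set_Bset A2set_finite Bset_finite, ncard_A1set, ncard_A2set,
    ncard_Bset]
  ring

variable (G' : SimpleGraph V)

lemma gadget_adj_of_isA1 {a b : GadgetV V r} (ha : isA1 a) (hab : a ≠ b) :
    (gadget G' r).Adj a b := by
  simp [gadget, hab, ha]

lemma A1set_subset_neighborSet {v : GadgetV V r} (hv : v ∉ A1set V r) :
    A1set V r ⊆ (gadget G' r).neighborSet v := by
  rintro a ha
  exact (gadget_adj_of_isA1 G' ha (by rintro rfl; exact hv ha)).symm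

lemma isClique_A2set : (gadget G' r).IsClique (A2set V r) := fun _ ha _ hb hab => by
  simp_all [gadget, A2set]

lemma isClique_Bset : (gadget G' r).IsClique (Bset V r) := fun _ ha _ hb hab => by
  simp_all [gadget, Bset]

lemma isClique_image_inl {s : Set V} (hs : G'.IsClique s) :
    (gadget G' r).IsClique (Sum.inl '' s) := by
  rintro _ ⟨u, hu, rfl⟩ _ ⟨w, hw, rfl⟩ huw
  have huw' : u ≠ w := fun h => huw (h ▸ rfl)
  simp [gadget, huw', hs hu hw huw']

end Gadget

lemma gammaR_mul (r : ℕ) :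
    gammaR r * (2 * (r : ℚ) ^ 2 + 2 * r - 1) = (r : ℚ) ^ 2 + r - 1 := by
  have hden : 2 * (r : ℚ) ^ 2 + 2 * r - 1 ≠ 0 := by
    rcases r with _ | r
    · norm_num
    · push_cast; nlinarith
  rw [gammaR, div_mul_cancel₀ _ hden]

theorem isQuasiClique_Xset_union_image_inl {V : Type*} (G' : SimpleGraph V) {r : ℕ} (hr : 0 < r)
    {L : Finset V} (hL : G'.IsNClique r L) :
    IsQuasiClique (gadget G' r) (gammaR r) (Xset V r ∪ Sum.inl '' (L : Set V)) := by
  set Q := Xset V r ∪ Sum.inl '' (L : Set V)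
  have hQ : Q.Finite := Xset_finite.union (L.finite_toSet.image _)
  have hQcard : Q.ncard = 2 * r ^ 2 + 2 * r := by
    rw [ncard_union_eq (disjoint_Xset_image_inl _) Xset_finite (L.finite_toSet.image _), ncard_Xset,
      ncard_image_of_injective _ Sum.inl_injective, ncard_coe_finset, hL.card_eq]
    ring
  have hA1Q : A1set V r ⊆ Q := fun _ h => Or.inl (Or.inl h)
  have hA2Q : A2set V r ⊆ Q := fun _ h => Or.inl (Or.inr (Or.inl h))
  have hBQ : Bset V r ⊆ Q := fun _ h => Or.inl (Or.inr (Or.inr h))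
  have hdom : ∀ a ∈ A1set V r, ∀ w ∈ Q, w ≠ a → (gadget G' r).Adj a w :=
    fun a ha w _ hw => gadget_adj_of_isA1 G' ha hw.symm
  have hclique : ∀ C ⊆ Q, (gadget G' r).IsClique C → Disjoint (A1set V r) C →
      ∀ v ∈ C, r ^ 2 + C.ncard ≤ degIn (gadget G' r) Q v + 1 := fun C hCQ hC hdisj v hv =>
    ncard_A1set (V := V) ▸ ncard_add_ncard_le_degIn_add_one hQ hv hCQ hC hA1Q
      (A1set_subset_neighborSet G' (hdisj.notMem_of_mem_right hv)) hdisj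
  have hdeg : ∀ v ∈ Q, r ^ 2 + r ≤ degIn (gadget G' r) Q v + 1 := by
    rintro v ((h1 | h2 | hB) | hLv)
    · rw [degIn_eq_ncard_sub_one_of_forall_adj (hA1Q h1) (hdom v h1), hQcard]
      omega
    · have := hclique (A2set V r) hA2Q (isClique_A2set G') disjoint_A1set_A2set v h2
      rw [ncard_A2set] at this
      have := Nat.le_self_pow two_ne_zero r
      omega
    · simpa [ncard_Bset] using
        hclique (Bset V r) hBQ (isClique_Bset G') disjoint_A1set_Bset v hB
    · simpa [ncard_image_of_injective _ Sum.inl_injective, hL.card_eq] using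
        hclique _ subset_union_right (isClique_image_inl G' hL.isClique)
        ((disjoint_Xset_image_inl _).mono_left subset_union_left) v hLv
  have ha₀ : (Sum.inr (Sum.inl ⟨0, by positivity⟩) : GadgetV V r) ∈ A1set V r := trivial
  refine ⟨induce_connected_of_forall_adj (hA1Q ha₀) (hdom _ ha₀), fun v hv => ?_⟩
  have hthreshold : gammaR r * ((Q.ncard : ℚ) - 1) = ((r ^ 2 + r - 1 : ℤ) : ℚ) := by
    rw [hQcard]; push_cast; rw [← gammaR_mul r]
  rw [hthreshold, Int.ceil_intCast]
  have := hdeg v hv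
  zify at this
  linarith

theorem stmt_6_general {V : Type*} (G' : SimpleGraph V) (r : ℕ) (hr : 0 < r)
    (hclique : ∃ L : Finset V, G'.IsNClique r L) :
    ∃ Q' : Set (GadgetV V r),
      IsQuasiClique (gadget G' r) (gammaR r) Q' ∧ Xset V r ⊂ Q' := by
  obtain ⟨L, hL⟩ := hclique
  obtain ⟨u, hu⟩ := Finset.card_pos.mp (hL.card_eq ▸ hr)
  exact ⟨_, isQuasiClique_Xset_union_image_inl G' hr hL,
    (ssubset_iff_of_subset subset_union_left).2 ⟨Sum.inl u, Or.inr ⟨u, hu, rfl⟩, inl_notMem_Xset u⟩⟩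

/-- If `G'` contains a clique of size `r`, then `X` is not a maximal
`γ_r`-quasi-clique in the gadget graph: there is a `γ_r`-quasi-clique strictly
containing `X`. -/
theorem stmt_6 {V : Type*} [Fintype V] (G' : SimpleGraph V) (r : ℕ) (hr : 0 < r)
    (hclique : ∃ L : Finset V, G'.IsNClique r L) :
    ∃ Q' : Set (GadgetV V r),
      IsQuasiClique (gadget G' r) (gammaR r) Q' ∧ Xset V r ⊂ Q' :=
  stmt_6_general G' r hr hclique
end

section
/- Let G' = (V',E') be a finite simple graph, r a positive integer, G = G(G',r) the gadget graph, X = A₁ ∪ A₂ ∪ B, and γ_r = (r²+r−1)/(2r²+2r−1). If X is not a maximal γ_r-quasi-clique in G, then G' contains a clique of size r. (Any γ_r-quasi-clique of G strictly containing X has the form X ∪ M with ∅ ≠ M ⊆ V'; necessarily |M| = r and M is a clique in G'.) -/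
open SimpleGraph Set

/-! If `Q ⊋ X` is a `γ_r`-quasi-clique then `Q = X ∪ M` with `∅ ≠ M ⊆ V'`, and
`|Q| - 1 = (2r² + 2r - 1) - r + |M|`, while `γ_r · (2r² + 2r - 1) = r² + r - 1`.
A vertex of `B` has degree exactly `r² + r - 1` in `Q`, which forces `|M| ≤ r`.
A vertex `u ∈ M` has degree `r² + d` with `d ≤ |M| - 1` neighbours in `M`, and the degree
condition at `u` forces `d ≥ r - 1`. Hence `|M| = r` and `M` is a clique of `G'`. -/

section

variable {V W : Type*} {r : ℕ}

lemma IsQuasiClique.mul_le_degIn {G : SimpleGraph W} {γ : ℚ} {Q : Set W} {v : W}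
    (hQ : IsQuasiClique G γ Q) (hv : v ∈ Q) : γ * ((Q.ncard : ℚ) - 1) ≤ degIn G Q v := by
  exact_mod_cast Int.ceil_le.1 (hQ.2 v hv)

lemma SimpleGraph.inter_neighborSet_subset_sdiff (G : SimpleGraph W) (M : Set W) (u : W) :
    M ∩ G.neighborSet u ⊆ M \ {u} :=
  fun _ hv => ⟨hv.1, (G.ne_of_adj hv.2).symm⟩

lemma degIn_add_one_le {G : SimpleGraph W} {M : Set W} {u : W} (hM : M.Finite) (hu : u ∈ M) :
    degIn G M u + 1 ≤ M.ncard := by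
  have hle := ncard_le_ncard (inter_neighborSet_subset_sdiff G M u) hM.sdiff
  have hpos := (ncard_pos hM).2 ⟨u, hu⟩
  rw [ncard_sdiff_singleton_of_mem hu] at hle
  rw [degIn]; omega

lemma SimpleGraph.isClique_of_ncard_le_degIn {G : SimpleGraph W} {M : Set W} (hM : M.Finite)
    (h : ∀ u ∈ M, M.ncard ≤ degIn G M u + 1) : G.IsClique M := by
  intro u hu v hv huv
  have hcard : (M \ {u}).ncard ≤ (M ∩ G.neighborSet u).ncard := by
    rw [ncard_sdiff_singleton_of_mem hu]; have := h u hu; rw [degIn] at this; omega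
  have heq := eq_of_subset_of_ncard_le (inter_neighborSet_subset_sdiff G M u) hcard hM.sdiff
  have hv' : v ∈ M \ {u} := ⟨hv, huv.symm⟩
  exact (heq ▸ hv').2

lemma Xset_eq_range : Xset V r = range Sum.inr := by
  ext (u | i | i | i) <;> simp [Xset, isA1, isA2, isB]

lemma inr_mem_Xset (y : Fin (r ^ 2) ⊕ Fin (r ^ 2) ⊕ Fin r) :
    (Sum.inr y : GadgetV V r) ∈ Xset V r :=
  Xset_eq_range ▸ mem_range_self y

lemma ncard_eq_of_Xset_subset [Finite V] {Q : Set (GadgetV V r)} (hXQ : Xset V r ⊆ Q) :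
    Q.ncard = 2 * r ^ 2 + r + (Sum.inl ⁻¹' Q).ncard := by
  rw [Xset_eq_range] at hXQ
  have hQ : Q = range Sum.inr ∪ Sum.inl '' (Sum.inl ⁻¹' Q) := by
    ext (u | y) <;> simp [hXQ (mem_range_self _)]
  have hdisj : Disjoint (range (Sum.inr : _ → GadgetV V r)) (Sum.inl '' (Sum.inl ⁻¹' Q)) :=
    isCompl_range_inl_range_inr.disjoint.symm.mono_right (image_subset_range _ _)
  conv_lhs => rw [hQ]
  rw [ncard_union_eq hdisj, ncard_range_of_injective Sum.inr_injective,
    ncard_image_of_injective _ Sum.inl_injective, Nat.card_sum, Nat.card_sum]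
  simp only [Nat.card_eq_fintype_card, Fintype.card_fin]
  ring

lemma preimage_inl_nonempty_of_Xset_ssubset {Q : Set (GadgetV V r)} (hXQ : Xset V r ⊂ Q) :
    (Sum.inl ⁻¹' Q).Nonempty := by
  obtain ⟨x, hxQ, hxX⟩ := exists_of_ssubset hXQ
  rcases x with u | y
  · exact ⟨u, hxQ⟩
  · exact absurd (inr_mem_Xset y) hxX

lemma gadget_neighborSet_inl (G' : SimpleGraph V) (u : V) :
    (gadget G' r).neighborSet (Sum.inl u) = {x | isA1 x} ∪ Sum.inl '' G'.neighborSet u := by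
  ext (v | i | i | i) <;> simp [gadget, isA1, isA2, isB, G'.adj_comm _ u]
  exact G'.ne_of_adj

lemma gadget_neighborSet_inr_inr_inr (G' : SimpleGraph V) (j : Fin r) :
    (gadget G' r).neighborSet (Sum.inr (Sum.inr (Sum.inr j))) =
      {x | isA1 x ∨ isB x} \ {Sum.inr (Sum.inr (Sum.inr j))} := by
  ext (v | i | i | i) <;> simp [gadget, isA1, isA2, isB, eq_comm]

lemma setOf_isA1_eq_range : {x : GadgetV V r | isA1 x} = range (Sum.inr ∘ Sum.inl) := by
  ext (v | i | i | i) <;> simp [isA1]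

lemma setOf_isB_eq_range : {x : GadgetV V r | isB x} = range (Sum.inr ∘ Sum.inr ∘ Sum.inr) := by
  ext (v | i | i | i) <;> simp [isB]

lemma ncard_setOf_isA1 : {x : GadgetV V r | isA1 x}.ncard = r ^ 2 := by
  rw [setOf_isA1_eq_range, ncard_range_of_injective (Sum.inr_injective.comp Sum.inl_injective)]
  simp

lemma ncard_setOf_isA1_or_isB : {x : GadgetV V r | isA1 x ∨ isB x}.ncard = r ^ 2 + r := by
  have hdisj : Disjoint {x : GadgetV V r | isA1 x} {x | isB x} :=
    disjoint_left.2 fun x h1 h2 => by rcases x with _ | _ | _ | _ <;> simp_all [isA1, isB]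
  have hA1 : {x : GadgetV V r | isA1 x}.Finite := setOf_isA1_eq_range ▸ finite_range _
  have hB : {x : GadgetV V r | isB x}.Finite := setOf_isB_eq_range ▸ finite_range _
  rw [ofPred_or, ncard_union_eq hdisj hA1 hB, ncard_setOf_isA1, setOf_isB_eq_range,
    ncard_range_of_injective (Sum.inr_injective.comp (Sum.inr_injective.comp Sum.inr_injective))]
  simp

lemma degIn_gadget_inr_inr_inr {G' : SimpleGraph V} {Q : Set (GadgetV V r)} (hXQ : Xset V r ⊆ Q)
    (j : Fin r) : degIn (gadget G' r) Q (Sum.inr (Sum.inr (Sum.inr j))) = r ^ 2 + r - 1 := by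
  have hN : (gadget G' r).neighborSet (Sum.inr (Sum.inr (Sum.inr j))) ⊆ Q := by
    rw [gadget_neighborSet_inr_inr_inr]
    exact fun x hx => hXQ (Or.imp_right Or.inr hx.1)
  rw [degIn, inter_eq_right.2 hN, gadget_neighborSet_inr_inr_inr,
    ncard_sdiff_singleton_of_mem (by simp [isB]), ncard_setOf_isA1_or_isB]

lemma degIn_gadget_inl [Finite V] {G' : SimpleGraph V} {Q : Set (GadgetV V r)}
    (hXQ : Xset V r ⊆ Q) (u : V) :
    degIn (gadget G' r) Q (Sum.inl u) = r ^ 2 + degIn G' (Sum.inl ⁻¹' Q) u := by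
  have hA1 : {x : GadgetV V r | isA1 x} ⊆ Q := fun x hx => hXQ (Or.inl hx)
  have hdisj :
      Disjoint {x : GadgetV V r | isA1 x} (Sum.inl '' (Sum.inl ⁻¹' Q ∩ G'.neighborSet u)) :=
    disjoint_left.2 fun x hx ⟨v, _, hv⟩ => by simp [← hv, isA1] at hx
  rw [degIn, degIn, gadget_neighborSet_inl, inter_union_distrib_left, inter_eq_right.2 hA1,
    inter_comm, ← image_inter_preimage, inter_comm, ncard_union_eq hdisj, ncard_setOf_isA1,
    ncard_image_of_injective _ Sum.inl_injective]

variable (r) in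
lemma gammaR_num_pos (hr : 0 < r) : (0 : ℚ) < r ^ 2 + r - 1 := by
  have : (1 : ℚ) ≤ r := by exact_mod_cast hr
  nlinarith

lemma le_of_gammaR_mul_le {m : ℕ} (hr : 0 < r)
    (h : gammaR r * (((2 * r ^ 2 + r + m : ℕ) : ℚ) - 1) ≤ ((r ^ 2 + r - 1 : ℕ) : ℚ)) : m ≤ r := by
  have hP := gammaR_num_pos r hr
  have hD : (0 : ℚ) < 2 * r ^ 2 + 2 * r - 1 := by linarith
  rw [gammaR, div_mul_eq_mul_div, div_le_iff₀ hD, Nat.cast_sub (by nlinarith)] at h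
  push_cast at h
  have : (m : ℚ) ≤ r := by linarith [le_of_mul_le_mul_left h hP]
  exact_mod_cast this

lemma le_add_one_of_gammaR_mul_le {m d : ℕ} (hr : 0 < r) (hdm : d + 1 ≤ m)
    (h : gammaR r * (((2 * r ^ 2 + r + m : ℕ) : ℚ) - 1) ≤ ((r ^ 2 + d : ℕ) : ℚ)) : r ≤ d + 1 := by
  have hP := gammaR_num_pos r hr
  have hD : (0 : ℚ) < 2 * r ^ 2 + 2 * r - 1 := by linarith
  have hdm' : (d : ℚ) + 1 ≤ m := by exact_mod_cast hdm
  rw [gammaR, div_mul_eq_mul_div, div_le_iff₀ hD] at h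
  push_cast at h
  -- `h` rearranges to `(r - 1 - d)·(2r² + 2r - 1) ≤ (r² + r - 1)·(r - m) ≤ (r² + r - 1)·(r - 1 - d)`.
  have : (r : ℚ) ≤ d + 1 := by nlinarith
  exact_mod_cast this

end

/-- If `X` is not a maximal `γ_r`-quasi-clique in the gadget graph (i.e. some
`γ_r`-quasi-clique strictly contains `X`), then `G'` contains a clique of
size `r`. -/
theorem stmt_13 {V : Type*} [Fintype V] (G' : SimpleGraph V) (r : ℕ) (hr : 0 < r)
    (h : ∃ Q' : Set (GadgetV V r),
        IsQuasiClique (gadget G' r) (gammaR r) Q' ∧ Xset V r ⊂ Q') :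
    ∃ L : Finset V, G'.IsNClique r L := by
  obtain ⟨Q, hQ, hXQ⟩ := h
  set M : Set V := Sum.inl ⁻¹' Q
  have hQcard := ncard_eq_of_Xset_subset hXQ.1
  have hMr : M.ncard ≤ r := by
    have hb := hQ.mul_le_degIn (hXQ.1 (inr_mem_Xset (Sum.inr (Sum.inr ⟨0, hr⟩))))
    rw [hQcard, degIn_gadget_inr_inr_inr hXQ.1] at hb
    exact le_of_gammaR_mul_le hr hb
  have hdeg : ∀ u ∈ M, r ≤ degIn G' M u + 1 := fun u hu => by
    have hu' := hQ.mul_le_degIn (show Sum.inl u ∈ Q from hu)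
    rw [hQcard, degIn_gadget_inl hXQ.1] at hu'
    exact le_add_one_of_gammaR_mul_le hr (degIn_add_one_le M.toFinite hu) hu'
  obtain ⟨u, hu⟩ := preimage_inl_nonempty_of_Xset_ssubset hXQ
  have hMr' : M.ncard = r := hMr.antisymm ((hdeg u hu).trans (degIn_add_one_le M.toFinite hu))
  refine ⟨M.toFinite.toFinset, ?_, ?_⟩
  · rw [Finite.coe_toFinset]
    exact G'.isClique_of_ncard_le_degIn M.toFinite fun v hv => hMr' ▸ hdeg v hv
  · rw [← ncard_eq_toFinset_card M, hMr']
end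

section
/- Correctness of the reduction in Theorem 1 (NP-hardness of checking maximality of a quasi-clique): Let G' = (V',E') be a finite simple graph, r a positive integer, G = G(G',r) the gadget graph, X = A₁ ∪ A₂ ∪ B, and γ_r = (r²+r−1)/(2r²+2r−1). Then X is a γ_r-quasi-clique of G, and X is NOT a maximal γ_r-quasi-clique in G if and only if G' contains a clique of size r. -/
open SimpleGraph Set

/-!
Every vertex of `A₁` is adjacent to all other vertices, so every `Q ⊇ X` induces a connected
graph, and `Q = X ∪ S` for some `S ⊆ V'`. With `n = |S|`, the degrees in `G[Q]` are `|Q| - 1`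
on `A₁`, `2r² - 1` on `A₂`, `r² + r - 1` on `B` and `r² + deg_S u` at `u ∈ S`, while the
threshold `⌈γ_r (2r² + r + n - 1)⌉` is at most `r² + r - 1` exactly when `n ≤ r`. So the
vertices of `B` force `n ≤ r`, after which `A₁` and `A₂` are harmless. A vertex `u ∈ S` has
`deg_S u ≤ n - 1`, and then it meets the threshold only if `deg_S u ≥ r - 1`: for nonempty `S`
this forces `n = r` and `S` to be a clique, and conversely an `r`-clique meets every threshold.
-/

open Finset

namespace SimpleGraph

variable {W : Type*} {G : SimpleGraph W}

lemma induce_connected_of_forall_adj_s14 {s : Set W} {a : W} (ha : a ∈ s)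
    (hadj : ∀ x ∈ s, x ≠ a → G.Adj a x) : (G.induce s).Connected := by
  rw [connected_iff_exists_forall_reachable]
  refine ⟨⟨a, ha⟩, fun ⟨x, hx⟩ => ?_⟩
  by_cases hxa : x = a
  · subst hxa; rfl
  · exact Adj.reachable (hadj x hx hxa)

variable [DecidableEq W] [DecidableRel G.Adj] {s : Finset W}

lemma filter_adj_subset_erase (u : W) : {v ∈ s | G.Adj u v} ⊆ s.erase u := fun v hv => by
  rw [mem_filter] at hv
  exact mem_erase.2 ⟨hv.2.ne', hv.1⟩

lemma card_filter_adj_lt {u : W} (hu : u ∈ s) : #{v ∈ s | G.Adj u v} < #s :=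
  (Finset.card_le_card (filter_adj_subset_erase u)).trans_lt (card_erase_lt_of_mem hu)

lemma isClique_iff_forall_card_filter_adj :
    G.IsClique (s : Set W) ↔ ∀ u ∈ s, #s ≤ #{v ∈ s | G.Adj u v} + 1 := by
  have hcard : ∀ u ∈ s,
      s.erase u ⊆ {v ∈ s | G.Adj u v} ↔ #s ≤ #{v ∈ s | G.Adj u v} + 1 := by
    intro u hu
    rw [← card_erase_add_one hu, Nat.add_le_add_iff_right]
    exact ⟨Finset.card_le_card,
      fun h => (eq_of_subset_of_card_le (filter_adj_subset_erase u) h).ge⟩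
  refine ⟨fun h u hu => (hcard u hu).1 fun v hv => ?_, fun h u hu v hv huv => ?_⟩
  · exact mem_filter.2
      ⟨mem_of_mem_erase hv, h hu (mem_of_mem_erase hv) (ne_of_mem_erase hv).symm⟩
  · exact (mem_filter.1 ((hcard u hu).2 (h u hu) (mem_erase.2 ⟨huv.symm, hv⟩))).2

end SimpleGraph

section XsetUnion

variable {V : Type*} {r : ℕ}

def xsetUnion (r : ℕ) (S : Finset V) : Set (GadgetV V r) :=
  ↑(S.disjSum (univ : Finset (Fin (r ^ 2) ⊕ Fin (r ^ 2) ⊕ Fin r)))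

lemma xset_eq_xsetUnion_empty : Xset V r = xsetUnion r ∅ := by
  ext (u | i | i | i) <;> simp [Xset, xsetUnion, isA1, isA2, isB]

lemma xset_ssubset_xsetUnion_iff {S : Finset V} : Xset V r ⊂ xsetUnion r S ↔ S.Nonempty := by
  rw [xset_eq_xsetUnion_empty, xsetUnion, xsetUnion, coe_ssubset]
  refine ⟨fun h => Finset.nonempty_iff_ne_empty.2 ?_, fun h =>
    disjSum_ssubset_disjSum_of_ssubset_of_subset (Finset.empty_ssubset.2 h) subset_rfl⟩
  rintro rfl
  exact h.ne rfl

lemma exists_eq_xsetUnion [Fintype V] {Q : Set (GadgetV V r)} (h : Xset V r ⊆ Q) :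
    ∃ S : Finset V, Q = xsetUnion r S := by
  classical
  refine ⟨univ.filter fun u => Sum.inl u ∈ Q, ?_⟩
  ext (u | i | i | i)
  · simp [xsetUnion]
  all_goals exact iff_of_true (h (by simp [Xset, isA1, isA2, isB])) (by simp [xsetUnion])

lemma ncard_xsetUnion (S : Finset V) : (xsetUnion r S).ncard = 2 * r ^ 2 + r + #S := by
  simp only [xsetUnion, Set.ncard_coe_finset, card_disjSum, card_univ, Fintype.card_sum,
    Fintype.card_fin]
  ring

variable (G' : SimpleGraph V) (S : Finset V)

@[simp] lemma gadget_adj_inl {u v : V} :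
    (gadget G' r).Adj (Sum.inl u) (Sum.inl v) ↔ G'.Adj u v := by
  simpa [gadget, isA1, isA2, isB, G'.adj_comm v u] using G'.ne_of_adj

lemma degIn_xsetUnion_inl [DecidableRel G'.Adj] (u : V) :
    degIn (gadget G' r) (xsetUnion r S) (Sum.inl u) = r ^ 2 + #{v ∈ S | G'.Adj u v} := by
  have : xsetUnion r S ∩ (gadget G' r).neighborSet (Sum.inl u) =
      ↑({v ∈ S | G'.Adj u v}.disjSum
        ((univ : Finset (Fin (r ^ 2))).disjSum (∅ : Finset (Fin (r ^ 2) ⊕ Fin r)))) := by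
    ext (v | i | i | i)
    · simp [xsetUnion]
    all_goals simp [xsetUnion, gadget, isA1, isA2, isB]
  rw [degIn, this, Set.ncard_coe_finset]
  simp [card_disjSum, add_comm]

lemma degIn_xsetUnion_a1 (i : Fin (r ^ 2)) :
    degIn (gadget G' r) (xsetUnion r S) (Sum.inr (Sum.inl i)) = 2 * r ^ 2 + r + #S - 1 := by
  have : xsetUnion r S ∩ (gadget G' r).neighborSet (Sum.inr (Sum.inl i)) =
      xsetUnion r S \ {Sum.inr (Sum.inl i)} := by
    ext (v | j | j | j) <;> simp [xsetUnion, gadget, isA1, isA2, isB, eq_comm]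
  rw [degIn, this, Set.ncard_sdiff_singleton_of_mem (by simp [xsetUnion]), ncard_xsetUnion]

lemma degIn_xsetUnion_a2 (i : Fin (r ^ 2)) :
    degIn (gadget G' r) (xsetUnion r S) (Sum.inr (Sum.inr (Sum.inl i))) =
      r ^ 2 + (r ^ 2 - 1) := by
  have : xsetUnion r S ∩ (gadget G' r).neighborSet (Sum.inr (Sum.inr (Sum.inl i))) =
      ↑((∅ : Finset V).disjSum ((univ : Finset (Fin (r ^ 2))).disjSum
        ((univ.erase i).disjSum (∅ : Finset (Fin r))))) := by
    ext (v | j | j | j) <;> simp [xsetUnion, gadget, isA1, isA2, isB, eq_comm]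
  rw [degIn, this, Set.ncard_coe_finset]
  simp [card_disjSum]

lemma degIn_xsetUnion_b (i : Fin r) :
    degIn (gadget G' r) (xsetUnion r S) (Sum.inr (Sum.inr (Sum.inr i))) = r ^ 2 + (r - 1) := by
  have : xsetUnion r S ∩ (gadget G' r).neighborSet (Sum.inr (Sum.inr (Sum.inr i))) =
      ↑((∅ : Finset V).disjSum ((univ : Finset (Fin (r ^ 2))).disjSum
        ((∅ : Finset (Fin (r ^ 2))).disjSum (univ.erase i)))) := by
    ext (v | j | j | j) <;> simp [xsetUnion, gadget, isA1, isA2, isB, eq_comm]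
  rw [degIn, this, Set.ncard_coe_finset]
  simp [card_disjSum]

lemma induce_xsetUnion_connected (hr : 0 < r) :
    ((gadget G' r).induce (xsetUnion r S)).Connected :=
  induce_connected_of_forall_adj_s14 (a := Sum.inr (Sum.inl ⟨0, by positivity⟩))
    (by simp [xsetUnion]) fun x _ hx => by
      rw [gadget, fromRel_adj]
      exact ⟨hx.symm, Or.inl (Or.inl trivial)⟩

section Threshold

variable (hr : 0 < r)
include hr

lemma ceil_gammaR_mul_le_iff (n m : ℕ) :
    ⌈gammaR r * (((2 * r ^ 2 + r + n : ℕ) : ℚ) - 1)⌉ ≤ (m : ℤ) ↔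
      ((r : ℚ) ^ 2 + r - 1) * (2 * r ^ 2 + r + n - 1) ≤ m * (2 * r ^ 2 + 2 * r - 1) := by
  have h1 : (1 : ℚ) ≤ r := by exact_mod_cast hr
  rw [Int.ceil_le, gammaR, div_mul_eq_mul_div, div_le_iff₀ (by nlinarith)]
  push_cast
  rfl

lemma ceil_gammaR_mul_le_iff_le (n : ℕ) :
    ⌈gammaR r * (((2 * r ^ 2 + r + n : ℕ) : ℚ) - 1)⌉ ≤ ((r ^ 2 + (r - 1) : ℕ) : ℤ) ↔
      n ≤ r := by
  have h1 : (1 : ℚ) ≤ r := by exact_mod_cast hr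
  have hc : (0 : ℚ) < r ^ 2 + r - 1 := by nlinarith
  rw [ceil_gammaR_mul_le_iff hr, ← Nat.cast_le (α := ℚ)]
  push_cast [Nat.cast_sub hr]
  constructor <;> intro h <;> nlinarith

lemma le_add_one_of_ceil_gammaR_mul_le {n d : ℕ} (hdn : d < n)
    (h : ⌈gammaR r * (((2 * r ^ 2 + r + n : ℕ) : ℚ) - 1)⌉ ≤ ((r ^ 2 + d : ℕ) : ℤ)) :
    r ≤ d + 1 := by
  rw [ceil_gammaR_mul_le_iff hr] at h
  by_contra! hlt
  have h1 : (1 : ℚ) ≤ r := by exact_mod_cast hr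
  have h2 : (d : ℚ) + 1 ≤ n := by exact_mod_cast hdn
  have h3 : (d : ℚ) + 2 ≤ r := by exact_mod_cast hlt
  push_cast at h
  -- the left side exceeds the right by `(r² + r - 1)(n - d - 1) + (r² + r)(r - d - 1) > 0`
  nlinarith [mul_le_mul_of_nonneg_left h2 (by nlinarith : (0 : ℚ) ≤ r ^ 2 + r - 1)]

end Threshold

lemma isQuasiClique_xsetUnion_iff [DecidableRel G'.Adj] (hr : 0 < r) :
    IsQuasiClique (gadget G' r) (gammaR r) (xsetUnion r S) ↔
      #S ≤ r ∧ ∀ u ∈ S, ⌈gammaR r * (((2 * r ^ 2 + r + #S : ℕ) : ℚ) - 1)⌉ ≤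
        ((r ^ 2 + #{v ∈ S | G'.Adj u v} : ℕ) : ℤ) := by
  have hB := ceil_gammaR_mul_le_iff_le hr #S
  rw [IsQuasiClique, ncard_xsetUnion]
  constructor
  · rintro ⟨-, h⟩
    refine ⟨?_, fun u hu => ?_⟩
    · have := h (Sum.inr (Sum.inr (Sum.inr ⟨0, hr⟩))) (by simp [xsetUnion])
      rwa [degIn_xsetUnion_b, hB] at this
    · simpa [degIn_xsetUnion_inl] using h (Sum.inl u) (by simpa [xsetUnion])
  · rintro ⟨hS, h⟩
    refine ⟨induce_xsetUnion_connected G' S hr, ?_⟩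
    have hr2 : r ≤ r ^ 2 := Nat.le_self_pow two_ne_zero r
    rintro (u | i | i | i) hv
    · rw [degIn_xsetUnion_inl]
      exact h u (by simpa [xsetUnion] using hv)
    all_goals
      refine (hB.2 hS).trans (Nat.cast_le.2 ?_)
      simp only [degIn_xsetUnion_a1, degIn_xsetUnion_a2, degIn_xsetUnion_b]
      omega

lemma isQuasiClique_xsetUnion_iff_isNClique [DecidableEq V] [DecidableRel G'.Adj]
    (hr : 0 < r) (hS : S.Nonempty) :
    IsQuasiClique (gadget G' r) (gammaR r) (xsetUnion r S) ↔ G'.IsNClique r S := by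
  rw [isQuasiClique_xsetUnion_iff G' S hr, isNClique_iff, isClique_iff_forall_card_filter_adj]
  obtain ⟨w, hw⟩ := hS
  constructor
  · rintro ⟨hSr, h⟩
    have hle : ∀ u ∈ S, r ≤ #{v ∈ S | G'.Adj u v} + 1 := fun u hu =>
      le_add_one_of_ceil_gammaR_mul_le hr (card_filter_adj_lt hu) (h u hu)
    have := card_filter_adj_lt (G := G') hw
    have := hle w hw
    exact ⟨fun u hu => hSr.trans (hle u hu), by omega⟩
  · rintro ⟨h, rfl⟩
    refine ⟨le_rfl, fun u hu => ((ceil_gammaR_mul_le_iff_le hr _).2 le_rfl).trans ?_⟩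
    have := h u hu
    exact Nat.cast_le.2 (by omega)

end XsetUnion

/-- Correctness of the reduction: `X` is a `γ_r`-quasi-clique of the gadget
graph, and `X` is not a maximal `γ_r`-quasi-clique (some `γ_r`-quasi-clique
strictly contains `X`) if and only if `G'` contains a clique of size `r`. -/
theorem stmt_14 {V : Type*} [Fintype V] (G' : SimpleGraph V) (r : ℕ) (hr : 0 < r) :
    IsQuasiClique (gadget G' r) (gammaR r) (Xset V r) ∧
      ((∃ Q' : Set (GadgetV V r),
          IsQuasiClique (gadget G' r) (gammaR r) Q' ∧ Xset V r ⊂ Q') ↔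
        ∃ L : Finset V, G'.IsNClique r L) := by
  classical
  refine ⟨xset_eq_xsetUnion_empty ▸ (isQuasiClique_xsetUnion_iff G' ∅ hr).2 (by simp),
    ?_, ?_⟩
  · rintro ⟨Q, hQ, hXQ⟩
    obtain ⟨S, rfl⟩ := exists_eq_xsetUnion hXQ.subset
    have hS := xset_ssubset_xsetUnion_iff.1 hXQ
    exact ⟨S, (isQuasiClique_xsetUnion_iff_isNClique G' S hr hS).1 hQ⟩
  · rintro ⟨L, hL⟩
    have hL0 : L.Nonempty := card_pos.1 (hL.card_eq ▸ hr)
    exact ⟨_, (isQuasiClique_xsetUnion_iff_isNClique G' L hr hL0).2 hL,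
      xset_ssubset_xsetUnion_iff.2 hL0⟩
end
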